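/- Every hyperplane in a CAT(0) cube complex X separates X into exactly two connected components. -/

import Mathlib

/-!
In a median graph no vertex is equidistant from the two ends of an edge `ab`, so the vertices
split into the halfspaces `{x | d(x,a) < d(x,b)}` and `{x | d(x,b) < d(x,a)}`. An edge is dual
to the hyperplane of `ab` exactly when it joins the two halfspaces, so deleting these edges
leaves no path between them; conversely each halfspace stays connected, since a geodesic from
one of its vertices to `a` (or `b`) never leaves it.
-/

/-- A combinatorial CAT(0) cube complex, presented by its 1-skeleton.
By the theorem of Chepoi and Roller, the 1-skeleta of CAT(0) cube complexes
(cube complexes that are simply connected and whose vertex links are flag,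
equivalently nonpositively curved in the sense of Gromov) are exactly the
median graphs, and a CAT(0) cube complex is determined by its 1-skeleton:
its cubes are exactly the induced subgraphs isomorphic to Boolean hypercubes. -/
structure CCC where
  V : Type
  graph : SimpleGraph V
  conn : graph.Connected
  median : ∀ x y z : V, ∃! m : V,
    graph.dist x m + graph.dist m y = graph.dist x y ∧
    graph.dist y m + graph.dist m z = graph.dist y z ∧
    graph.dist x m + graph.dist m z = graph.dist x z

namespace CCC

variable (X : CCC)

/-- An embedded `n`-dimensional cube of the cube complex: vertices of the
Boolean cube `{0,1}^n` mapped injectively onto vertices of `X`, with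
adjacency exactly between vertices differing in one coordinate. -/
def IsCubeEmb {n : ℕ} (c : (Fin n → Bool) → X.V) : Prop :=
  Function.Injective c ∧
    ∀ f g : Fin n → Bool,
      X.graph.Adj (c f) (c g) ↔ (Finset.univ.filter fun i => f i ≠ g i).card = 1

/-- `u` and `v` are diagonally opposite vertices of a cube of `X`. -/
def SpansCube (u v : X.V) : Prop :=
  ∃ (n : ℕ) (c : (Fin n → Bool) → X.V),
    X.IsCubeEmb c ∧ c (fun _ => false) = u ∧ c (fun _ => true) = v

/-- The (metric) interval between two vertices. For two vertices spanning a
cube, this is exactly the vertex set of the (minimal) cube containing both. -/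
def Interval (u v : X.V) : Set X.V :=
  {x | X.graph.dist u x + X.graph.dist x v = X.graph.dist u v}

/-- A set of vertices which is the vertex set of a cube of `X`. -/
def IsCubeSet (s : Set X.V) : Prop :=
  ∃ (n : ℕ) (c : (Fin n → Bool) → X.V), X.IsCubeEmb c ∧ s = Set.range c

/-- The star `St(C)` of the cube `C` spanned by `u` and `v`: the union of all
cubes containing `C` as a subface. -/
def StarCube (u v : X.V) : Set X.V :=
  ⋃₀ {s | X.IsCubeSet s ∧ X.Interval u v ⊆ s}

/-- The star of a vertex: the union of all cubes containing it. -/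
def StarV (v : X.V) : Set X.V := X.StarCube v v

/-- The (oriented) Djoković relation: the edges `(a,b)` and `(a',b')` are dual
to the same hyperplane, with `a` and `a'` on the same side of it. In a median
graph this is the relation "being opposite edges of a common square", extended
transitively (in median graphs the Djoković relation is already transitive). -/
def DjRel (a b a' b' : X.V) : Prop :=
  X.graph.Adj a b ∧ X.graph.Adj a' b' ∧
    X.graph.dist a a' + 1 = X.graph.dist a b' ∧
    X.graph.dist b b' + 1 = X.graph.dist b a'

/-- The edges `(a,b)` and `(a',b')` are dual to the same hyperplane
(unoriented version). -/
def UDual (a b a' b' : X.V) : Prop := X.DjRel a b a' b' ∨ X.DjRel a b b' a'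

/-- `x` lies in the halfspace of the hyperplane dual to the edge `(a,b)`
containing `a`. -/
def SideOf (a b x : X.V) : Prop := X.graph.dist x a < X.graph.dist x b

/-- The hyperplane dual to the edge `(a,b)` separates the vertices `x, y`. -/
def Separates (a b x y : X.V) : Prop :=
  (X.SideOf a b x ∧ X.SideOf b a y) ∨ (X.SideOf b a x ∧ X.SideOf a b y)

/-- The hyperplanes dual to the edges `(a,b)` and `(a',b')` cross, i.e. they
pass through a common cube: there is a square with one pair of opposite edges
dual to the first hyperplane and one adjacent pair dual to the second. -/
def Cross (a b a' b' : X.V) : Prop :=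
  ∃ w x y z : X.V,
    X.graph.Adj w x ∧ X.graph.Adj y z ∧ X.graph.Adj w y ∧ X.graph.Adj x z ∧
    X.UDual w x a b ∧ X.UDual w y a' b'

/-- The distance from the vertex `v` to the hyperplane `H` dual to the edge
`(a,b)`, assuming `v` lies on the `a`-side: `d(v,H) = hDist v a b + 1/2`,
where `hDist v a b = min { d(v,x) | x in the halfspace not containing v } - 1`.
Distances between vertices here are measured in the normal-cube-path metric;
for a CAT(0) cube complex this minimum is realized on `N(H)` and agrees with
the corresponding graph-metric computation. -/
noncomputable def hDist (v a b : X.V) : ℕ :=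
  sInf {n | ∃ x : X.V, X.SideOf b a x ∧ X.graph.dist v x = n} - 1

end CCC

namespace CCC

/-- The 1-skeleton of `X` with all edges dual to the hyperplane of the edge
`(a,b)` removed. -/
def deleteHyperplane (X : CCC) (a b : X.V) : SimpleGraph X.V where
  Adj u v := X.graph.Adj u v ∧ ¬ X.UDual u v a b ∧ ¬ X.UDual v u a b
  symm := ⟨fun u v h => ⟨h.1.symm, h.2.2, h.2.1⟩⟩
  loopless := ⟨fun u h => X.graph.loopless.irrefl u h.1⟩

end CCC

namespace SimpleGraph

variable {V : Type*} {G : SimpleGraph V} {u v : V}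

theorem Reachable.exists_adj_dist_add_one (hr : G.Reachable u v) (hne : u ≠ v) :
    ∃ w, G.Adj u w ∧ G.dist w v + 1 = G.dist u v := by
  obtain ⟨p, hp⟩ := hr.exists_walk_length_eq_dist
  cases p with
  | nil => exact absurd rfl hne
  | cons huw q =>
    refine ⟨_, huw, le_antisymm ?_ ?_⟩
    · rw [← hp, Walk.length_cons]
      exact Nat.add_le_add_right (dist_le q) 1
    · calc G.dist u v ≤ G.dist u _ + G.dist _ v := huw.reachable.dist_triangle_left v
        _ = G.dist _ v + 1 := by rw [dist_eq_one_iff_adj.mpr huw, add_comm]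

theorem Reachable.iff_of_forall_adj {p : V → Prop} (hp : ∀ ⦃x y⦄, G.Adj x y → (p x ↔ p y))
    (hr : G.Reachable u v) : p u ↔ p v := by
  rw [reachable_iff_reflTransGen] at hr
  induction hr with
  | refl => rfl
  | tail _ hxy ih => exact ih.trans (hp hxy)

end SimpleGraph

namespace CCC

variable (X : CCC) {a b u v x : X.V}

/-- In a median graph no vertex is equidistant from the two ends of an edge: the median of
`x, u, v` lies on the edge `uv`, hence is `u` or `v`, and lies on a geodesic from `x` to both. -/
theorem dist_add_one_eq_or_of_adj (huv : X.graph.Adj u v) (x : X.V) :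
    X.graph.dist x u + 1 = X.graph.dist x v ∨ X.graph.dist x v + 1 = X.graph.dist x u := by
  obtain ⟨m, ⟨hxmu, hump, hxmv⟩, -⟩ := X.median x u v
  have huv₁ : X.graph.dist u v = 1 := SimpleGraph.dist_eq_one_iff_adj.mpr huv
  have hvu₁ : X.graph.dist v u = 1 := SimpleGraph.dist_eq_one_iff_adj.mpr huv.symm
  rw [huv₁] at hump
  rcases Nat.add_eq_one_iff.mp hump with ⟨hum, -⟩ | ⟨-, hmv⟩
  · rw [← X.conn.dist_eq_zero_iff.mp hum] at hxmv
    omega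
  · rw [X.conn.dist_eq_zero_iff.mp hmv] at hxmu
    omega

variable {X}

theorem SideOf.not_sideOf (h : X.SideOf a b x) : ¬ X.SideOf b a x :=
  lt_asymm h

theorem sideOf_or_sideOf (hab : X.graph.Adj a b) (x : X.V) :
    X.SideOf a b x ∨ X.SideOf b a x := by
  unfold SideOf
  rcases X.dist_add_one_eq_or_of_adj hab x with h | h <;> omega

theorem sideOf_iff (hab : X.graph.Adj a b) :
    X.SideOf a b x ↔ X.graph.dist x a + 1 = X.graph.dist x b := by
  unfold SideOf
  rcases X.dist_add_one_eq_or_of_adj hab x with h | h <;> omega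

theorem sideOf_self (hab : X.graph.Adj a b) : X.SideOf a b a := by
  simp [SideOf, SimpleGraph.dist_eq_one_iff_adj.mpr hab]

theorem DjRel.iff_sideOf (hab : X.graph.Adj a b) (huv : X.graph.Adj u v) :
    X.DjRel u v a b ↔ X.SideOf a b u ∧ X.SideOf b a v := by
  rw [sideOf_iff hab, sideOf_iff hab.symm]
  simp [DjRel, huv, hab]

theorem uDual_iff_separates (hab : X.graph.Adj a b) (huv : X.graph.Adj u v) :
    X.UDual u v a b ↔ X.Separates a b u v := by
  rw [UDual, DjRel.iff_sideOf hab huv, DjRel.iff_sideOf hab.symm huv, Separates]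

theorem separates_comm : X.Separates a b u v ↔ X.Separates a b v u := by
  unfold Separates
  tauto

theorem separates_swap : X.Separates a b u v ↔ X.Separates b a u v := by
  unfold Separates
  tauto

theorem deleteHyperplane_adj_iff (hab : X.graph.Adj a b) :
    (X.deleteHyperplane a b).Adj u v ↔ X.graph.Adj u v ∧ ¬ X.Separates a b u v := by
  refine ⟨fun h => ⟨h.1, (uDual_iff_separates hab h.1).not.mp h.2.1⟩, fun h => ⟨h.1, ?_, ?_⟩⟩
  · exact (uDual_iff_separates hab h.1).not.mpr h.2
  · rw [uDual_iff_separates hab h.1.symm, separates_comm]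
    exact h.2

theorem deleteHyperplane_comm (hab : X.graph.Adj a b) :
    X.deleteHyperplane a b = X.deleteHyperplane b a := by
  ext u v
  rw [deleteHyperplane_adj_iff hab, deleteHyperplane_adj_iff hab.symm, separates_swap]

theorem sideOf_iff_of_not_separates (hab : X.graph.Adj a b) (h : ¬ X.Separates a b u v) :
    X.SideOf a b u ↔ X.SideOf a b v := by
  rcases sideOf_or_sideOf hab u with hu | hu <;> rcases sideOf_or_sideOf hab v with hv | hv
  · exact iff_of_true hu hv
  · exact absurd (Or.inl ⟨hu, hv⟩) h
  · exact absurd (Or.inr ⟨hu, hv⟩) h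
  · exact iff_of_false hu.not_sideOf hv.not_sideOf

theorem sideOf_iff_of_reachable (hab : X.graph.Adj a b)
    (h : (X.deleteHyperplane a b).Reachable u v) :
    X.SideOf a b u ↔ X.SideOf a b v :=
  h.iff_of_forall_adj fun _ _ hxy =>
    sideOf_iff_of_not_separates hab ((deleteHyperplane_adj_iff hab).mp hxy).2

theorem reachable_of_sideOf (hab : X.graph.Adj a b) (hv : X.SideOf a b v) :
    (X.deleteHyperplane a b).Reachable v a := by
  induction hn : X.graph.dist v a generalizing v with
  | zero => rw [X.conn.dist_eq_zero_iff.mp hn]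
  | succ n ih =>
    obtain ⟨w, hvw, hwa⟩ := (X.conn.preconnected v a).exists_adj_dist_add_one
      (fun h => by simp [h] at hn)
    have hvb := (sideOf_iff hab).mp hv
    have hvb_le : X.graph.dist v b ≤ X.graph.dist v w + X.graph.dist w b :=
      X.conn.dist_triangle
    rw [SimpleGraph.dist_eq_one_iff_adj.mpr hvw] at hvb_le
    have hw : X.SideOf a b w := by unfold SideOf; omega
    have hstep : (X.deleteHyperplane a b).Adj v w := by
      refine (deleteHyperplane_adj_iff hab).mpr ⟨hvw, ?_⟩
      unfold Separates SideOf at *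
      omega
    exact hstep.reachable.trans (ih hw (by omega))

/-- **Every hyperplane in a CAT(0) cube complex separates it into exactly two
components** (Niblo–Reeves, Proposition 2.7): removing from the 1-skeleton all
edges dual to the hyperplane of the edge `(a,b)` leaves a graph whose
connected components are exactly two sets `A ∋ a` and `B ∋ b`. -/
theorem hyperplane_separates (X : CCC) (a b : X.V) (hab : X.graph.Adj a b) :
    ∃ A B : Set X.V, a ∈ A ∧ b ∈ B ∧ A ∩ B = ∅ ∧ A ∪ B = Set.univ ∧
      ∀ u v : X.V, (X.deleteHyperplane a b).Reachable u v ↔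
        ((u ∈ A ∧ v ∈ A) ∨ (u ∈ B ∧ v ∈ B)) := by
  refine ⟨{x | X.SideOf a b x}, {x | X.SideOf b a x}, sideOf_self hab, sideOf_self hab.symm,
    ?_, ?_, fun u v => ⟨fun h => ?_, ?_⟩⟩
  · exact Set.eq_empty_of_forall_notMem fun _ hx => hx.1.not_sideOf hx.2
  · exact Set.eq_univ_of_forall fun x => sideOf_or_sideOf hab x
  · rcases sideOf_or_sideOf hab u with hu | hu
    · exact Or.inl ⟨hu, (sideOf_iff_of_reachable hab h).mp hu⟩
    · rw [deleteHyperplane_comm hab] at h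
      exact Or.inr ⟨hu, (sideOf_iff_of_reachable hab.symm h).mp hu⟩
  · rintro (⟨hu, hv⟩ | ⟨hu, hv⟩)
    · exact (reachable_of_sideOf hab hu).trans (reachable_of_sideOf hab hv).symm
    · rw [deleteHyperplane_comm hab]
      exact (reachable_of_sideOf hab.symm hu).trans (reachable_of_sideOf hab.symm hv).symm

end CCC
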